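/- arXiv:math/0611055 — 3 statements merged into one kernel-verified Lean document; each statement's English description precedes it below -/
import Mathlib

section
/- Let (W, I) be a Coxeter group, let J, K ⊆ I, and let w be a minimal length element of the coset W_K w (i.e., w ∈ ᴷW) with w⁻¹ K w ⊆ J (meaning w⁻¹ s_k w ∈ W_J and is a simple reflection in J for each k ∈ K). Write w = x y with x ∈ ᴷW^J (minimal in both W_K\W and W/W_J) and y ∈ W_J. Then x⁻¹ K x ⊆ J, i.e., x⁻¹ s_k x is a simple reflection in J for each k ∈ K. -/
/-!
Put `t = x⁻¹ s_k x`. From `w = x y` and `w⁻¹ s_k w = s_j` we get `t = y s_j y⁻¹ ∈ W_J`, and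
`x t = s_k x` is one longer than `x` because `x` is minimal in `W_K x`. Since `x` is also minimal in
`x W_J`, lengths add: `ℓ (x t) = ℓ x + n` for some word of length `n` in the letters of `J` spelling
`t`. Hence that word has a single letter, i.e. `t = s_j'` with `j' ∈ J`.

Additivity comes from the exchange condition applied to a reduced word of `x` followed by a
`J`-word. The exchange condition itself is obtained from Tits' reflection cocycle
`η : W → {±1}^W`, `η (s_i) = δ_{s_i}`, `η (u v) = η u · (η v ∘ conj u⁻¹)`: `η w t = -1` forces `t`
into the left inversion sequence of every word for `w`, and holds whenever `ℓ (t w) < ℓ w`.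
-/

open CoxeterSystem

theorem SemidirectProduct.mk_pow {N G : Type*} [CommGroup N] [Group G] {φ : G →* MulAut N}
    (n : N) (g : G) (m : ℕ) :
    (⟨n, g⟩ : N ⋊[φ] G) ^ m = ⟨∏ l ∈ Finset.range m, φ (g ^ l) n, g ^ m⟩ := by
  induction m with
  | zero => simp
  | succ m ih =>
    rw [pow_succ, ih, SemidirectProduct.mul_def]
    congr 1
    · simp [Finset.prod_range_succ]
    · rw [pow_succ]

theorem Finset.prod_range_two_mul {M : Type*} [CommMonoid M] (f : ℕ → M) (m : ℕ) :
    ∏ r ∈ range (2 * m), f r = ∏ l ∈ range m, f (2 * l) * f (2 * l + 1) := by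
  induction m with
  | zero => simp
  | succ m ih => rw [Nat.mul_succ, prod_range_succ, prod_range_succ, prod_range_succ, ih, mul_assoc]

namespace CoxeterSystem

variable {B W : Type*} [Group W] {M : CoxeterMatrix B} (cs : CoxeterSystem M W)

local prefix:100 "s" => cs.simple
local prefix:100 "π" => cs.wordProd
local prefix:100 "ℓ" => cs.length
local prefix:100 "lis" => cs.leftInvSeq

section ReflectionCocycle

open scoped Classical

abbrev conjArrow : W →* MulAut (W → ℤˣ) :=
  mulAutArrow.comp (ConjAct.toConjAct : W ≃* ConjAct W).toMonoidHom

theorem conjArrow_apply (u : W) (f : W → ℤˣ) (t : W) : conjArrow u f t = f (u⁻¹ * t * u) := by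
  show f ((ConjAct.toConjAct u)⁻¹ • t) = _
  rw [ConjAct.smul_def]
  simp

theorem conjArrow_mulSingle (u t : W) (ε : ℤˣ) :
    conjArrow u (Pi.mulSingle t ε) = Pi.mulSingle (u * t * u⁻¹) ε := by
  funext t'
  simp only [conjArrow_apply, Pi.mulSingle_apply]
  congr 1
  apply propext
  constructor <;> rintro rfl <;> group

theorem isLiftable_reflCocycle :
    M.IsLiftable fun i ↦ (⟨Pi.mulSingle (s i) (-1), s i⟩ : (W → ℤˣ) ⋊[conjArrow] W) := by
  intro i i'
  set a := s i
  set p := s i * s i'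
  set D : ℕ → W → ℤˣ := fun r ↦ Pi.mulSingle (p ^ r * a) (-1)
  have hpm : p ^ M i i' = 1 := cs.simple_mul_simple_pow i i'
  -- `a` inverts `p`, so conjugating `p ^ r * a` by `p ^ l` gives `p ^ (2 * l + r) * a`
  have hD : ∀ l r, conjArrow (p ^ l) (D r) = D (2 * l + r) := by
    intro l r
    have hap : SemiconjBy a p⁻¹ p := by
      simp [SemiconjBy, a, p, cs.inv_simple, mul_assoc]
    simp only [D, conjArrow_mulSingle]
    rw [← inv_pow, mul_assoc, mul_assoc, (hap.pow_right l).eq, ← mul_assoc, ← mul_assoc,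
      ← pow_add, ← pow_add, show l + r + l = 2 * l + r by ring]
  have hstep : (⟨Pi.mulSingle a (-1), a⟩ * ⟨Pi.mulSingle (s i') (-1), s i'⟩ :
      (W → ℤˣ) ⋊[conjArrow] W) = ⟨D 0 * D 1, p⟩ := by
    rw [SemidirectProduct.mul_def, conjArrow_mulSingle]
    simp [D, a, p, mul_assoc]
  have hper : ∀ r, D (M i i' + r) = D r := fun r ↦ by simp only [D, pow_add, hpm, one_mul]
  show (_ * _) ^ M i i' = 1
  rw [hstep, SemidirectProduct.mk_pow, hpm]
  have : ∏ l ∈ Finset.range (M i i'), conjArrow (p ^ l) (D 0 * D 1) = 1 := by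
    calc ∏ l ∈ Finset.range (M i i'), conjArrow (p ^ l) (D 0 * D 1)
        = ∏ r ∈ Finset.range (2 * M i i'), D r := by
          simp only [map_mul, hD, Finset.prod_range_two_mul, add_zero]
      -- every `p ^ r * a` occurs twice, as `p ^ M i i' = 1`
      _ = (∏ r ∈ Finset.range (M i i'), D r) * ∏ r ∈ Finset.range (M i i'), D r := by
          simp only [two_mul, Finset.prod_range_add, hper]
      _ = 1 := funext fun t ↦ Int.units_mul_self _
  rw [this]; rfl

noncomputable def reflCocycleHom : W →* (W → ℤˣ) ⋊[conjArrow] W :=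
  cs.lift ⟨_, cs.isLiftable_reflCocycle⟩

noncomputable def reflCocycle (w : W) : W → ℤˣ := (cs.reflCocycleHom w).left

theorem reflCocycleHom_simple (i : B) :
    cs.reflCocycleHom (s i) = ⟨Pi.mulSingle (s i) (-1), s i⟩ :=
  cs.lift_apply_simple cs.isLiftable_reflCocycle i

theorem reflCocycleHom_right (w : W) : (cs.reflCocycleHom w).right = w :=
  DFunLike.congr_fun (cs.ext_simple (φ₁ := SemidirectProduct.rightHom.comp cs.reflCocycleHom)
    (φ₂ := MonoidHom.id W) fun i ↦ by simp [reflCocycleHom_simple]) w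

theorem reflCocycle_simple (i : B) : cs.reflCocycle (s i) = Pi.mulSingle (s i) (-1) := by
  simp [reflCocycle, reflCocycleHom_simple]

theorem reflCocycle_mul (u v : W) :
    cs.reflCocycle (u * v) = cs.reflCocycle u * conjArrow u (cs.reflCocycle v) := by
  simp [reflCocycle, SemidirectProduct.mul_left, reflCocycleHom_right]

theorem reflCocycle_inv (u : W) :
    cs.reflCocycle u⁻¹ = conjArrow u⁻¹ (cs.reflCocycle u)⁻¹ := by
  simp [reflCocycle, SemidirectProduct.inv_left, reflCocycleHom_right]

theorem mem_leftInvSeq_of_reflCocycle_ne_one {ω : List B} {t : W}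
    (h : cs.reflCocycle (π ω) t ≠ 1) : t ∈ lis ω := by
  induction ω generalizing t with
  | nil => simp [reflCocycle] at h
  | cons i ω ih =>
    rw [wordProd_cons, reflCocycle_mul, reflCocycle_simple, Pi.mul_apply, conjArrow_apply,
      cs.inv_simple] at h
    rw [leftInvSeq, List.mem_cons, List.mem_map]
    by_cases hti : t = s i
    · exact .inl hti
    · rw [Pi.mulSingle_eq_of_ne hti, one_mul] at h
      exact .inr ⟨_, ih h, by simp [← mul_assoc]⟩

theorem reflCocycle_self {t : W} (ht : cs.IsReflection t) : cs.reflCocycle t t = -1 := by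
  obtain ⟨v, i, rfl⟩ := ht
  simp only [reflCocycle_mul, reflCocycle_inv, reflCocycle_simple, Pi.mul_apply, conjArrow_apply,
    Pi.inv_apply]
  have h₁ : v⁻¹ * (v * s i * v⁻¹) * v = s i := by group
  have h₂ : v⁻¹⁻¹ * ((v * s i)⁻¹ * (v * s i * v⁻¹) * (v * s i)) * v⁻¹ = v * s i * v⁻¹ := by
    simp [mul_assoc, cs.inv_simple]
  rw [h₁, h₂, Pi.mulSingle_eq_same, mul_comm, ← mul_assoc, inv_mul_cancel, one_mul]

theorem exists_eraseIdx_of_mem_leftInvSeq {ω : List B} {t : W} (h : t ∈ lis ω) :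
    ∃ j < ω.length, t * π ω = π (ω.eraseIdx j) := by
  obtain ⟨j, hj, rfl⟩ := List.mem_iff_getElem.mp h
  refine ⟨j, by simpa using hj, ?_⟩
  rw [← List.getD_eq_getElem _ 1, cs.getD_leftInvSeq_mul_wordProd]

theorem length_mul_lt_of_reflCocycle_ne_one {w t : W} (h : cs.reflCocycle w t ≠ 1) :
    ℓ (t * w) < ℓ w := by
  obtain ⟨ω, hω, rfl⟩ := cs.exists_isReduced w
  obtain ⟨j, hj, hjt⟩ :=
    cs.exists_eraseIdx_of_mem_leftInvSeq (cs.mem_leftInvSeq_of_reflCocycle_ne_one h)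
  calc ℓ (t * π ω) ≤ (ω.eraseIdx j).length := hjt ▸ cs.length_wordProd_le _
    _ < ω.length := by rw [List.length_eraseIdx_of_lt hj]; omega
    _ = ℓ (π ω) := hω.symm

theorem reflCocycle_ne_one_of_length_mul_lt {w t : W} (ht : cs.IsReflection t)
    (h : ℓ (t * w) < ℓ w) : cs.reflCocycle w t ≠ 1 := by
  intro hw
  have htw : cs.reflCocycle (t * w) t ≠ 1 := by
    rw [reflCocycle_mul, Pi.mul_apply, conjArrow_apply, cs.reflCocycle_self ht, inv_mul_cancel,
      one_mul, hw]
    decide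
  have := cs.length_mul_lt_of_reflCocycle_ne_one htw
  rw [← mul_assoc, ht.mul_self, one_mul] at this
  omega

theorem exists_eraseIdx_of_length_mul_lt {ω : List B} {t : W} (ht : cs.IsReflection t)
    (h : ℓ (t * π ω) < ℓ (π ω)) : ∃ j < ω.length, t * π ω = π (ω.eraseIdx j) :=
  cs.exists_eraseIdx_of_mem_leftInvSeq <|
    cs.mem_leftInvSeq_of_reflCocycle_ne_one <| cs.reflCocycle_ne_one_of_length_mul_lt ht h

end ReflectionCocycle

theorem exists_eraseIdx_of_length_mul_simple_lt {ω : List B} {i : B}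
    (h : ℓ (π ω * s i) < ℓ (π ω)) : ∃ j < ω.length, π ω * s i = π (ω.eraseIdx j) := by
  simpa using cs.exists_eraseIdx_of_length_mul_lt (ω := ω)
    ((cs.isReflection_simple i).conj (π ω)) (by simpa using h)

section Parabolic

variable {J : Set B}

theorem wordProd_mem_closure {ω : List B} (hω : ∀ b ∈ ω, b ∈ J) :
    π ω ∈ Subgroup.closure (cs.simple '' J) :=
  Subgroup.list_prod_mem _ fun _ hx ↦ by
    obtain ⟨b, hb, rfl⟩ := List.mem_map.mp hx
    exact Subgroup.subset_closure ⟨b, hω b hb, rfl⟩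

theorem exists_wordProd_eq_of_mem_closure {u : W} (hu : u ∈ Subgroup.closure (cs.simple '' J)) :
    ∃ ω : List B, (∀ b ∈ ω, b ∈ J) ∧ π ω = u := by
  induction hu using Subgroup.closure_induction with
  | mem _ hu =>
    obtain ⟨i, hi, rfl⟩ := hu
    exact ⟨[i], by simpa using hi, cs.wordProd_singleton i⟩
  | one => exact ⟨[], by simp, cs.wordProd_nil⟩
  | mul _ _ _ _ hu hv =>
    obtain ⟨ω, hω, rfl⟩ := hu
    obtain ⟨ω', hω', rfl⟩ := hv
    exact ⟨ω ++ ω', by simpa [or_imp, forall_and] using ⟨hω, hω'⟩, cs.wordProd_append ω ω'⟩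
  | inv _ _ hu =>
    obtain ⟨ω, hω, rfl⟩ := hu
    exact ⟨ω.reverse, by simpa using hω, cs.wordProd_reverse ω⟩

theorem exists_shorter_word_of_length_mul_wordProd_lt {x : W}
    (hx : ∀ u ∈ Subgroup.closure (cs.simple '' J), ℓ x ≤ ℓ (x * u))
    {ω : List B} (hω : ∀ b ∈ ω, b ∈ J) (h : ℓ (x * π ω) < ℓ x + ω.length) :
    ∃ ω' : List B, (∀ b ∈ ω', b ∈ J) ∧ π ω' = π ω ∧ ω'.length < ω.length := by
  induction ω using List.reverseRecOn with
  | nil => simp at h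
  | append_singleton ω j ih =>
    simp only [List.mem_append, List.mem_singleton, or_imp, forall_and, forall_eq] at hω
    obtain ⟨hωJ, hj⟩ := hω
    by_cases hlt : ℓ (x * π ω) < ℓ x + ω.length
    · obtain ⟨ω', hω'J, hω'π, hω'len⟩ := ih hωJ hlt
      refine ⟨ω' ++ [j], ?_, by simp [wordProd_append, hω'π], by simpa⟩
      simpa [or_imp, forall_and] using ⟨hω'J, hj⟩
    have hdesc : ℓ (x * π ω * s j) < ℓ (x * π ω) := by
      rw [wordProd_append, wordProd_singleton, ← mul_assoc, List.length_append,
        List.length_singleton] at h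
      have := cs.length_mul_simple (x * π ω) j
      omega
    obtain ⟨ωx, hωx, rfl⟩ := cs.exists_isReduced x
    rw [← wordProd_append] at hdesc
    -- the exchange cannot delete a letter of `ωx`, as `x` is minimal in `x W_J`
    obtain ⟨k, -, hexch⟩ := cs.exists_eraseIdx_of_length_mul_simple_lt hdesc
    rcases lt_or_ge k ωx.length with hkx | hkx
    · exfalso
      set u := π ω * s j * (π ω)⁻¹
      have hu : u ∈ Subgroup.closure (cs.simple '' J) :=
        mul_mem (mul_mem (cs.wordProd_mem_closure hωJ) (Subgroup.subset_closure ⟨j, hj, rfl⟩))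
          (inv_mem (cs.wordProd_mem_closure hωJ))
      have hxu : π ωx * u = π (ωx.eraseIdx k) := by
        rw [List.eraseIdx_append_of_lt_length hkx, wordProd_append, wordProd_append] at hexch
        simp only [u, ← mul_assoc, hexch, mul_inv_cancel_right]
      have hshort : ℓ (π ωx * u) ≤ ωx.length - 1 :=
        hxu ▸ (cs.length_wordProd_le _).trans_eq (List.length_eraseIdx_of_lt hkx)
      have hℓx : ℓ (π ωx) = ωx.length := hωx
      have := hx u hu
      omega
    · refine ⟨ω.eraseIdx (k - ωx.length), fun b hb ↦ hωJ b (List.mem_of_mem_eraseIdx hb), ?_, ?_⟩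
      · rw [List.eraseIdx_append_of_length_le hkx, wordProd_append, wordProd_append,
          mul_assoc] at hexch
        rw [wordProd_append, wordProd_singleton, mul_left_cancel hexch]
      · have := (ω.eraseIdx_sublist (k - ωx.length)).length_le
        simp only [List.length_append, List.length_singleton]
        omega

theorem exists_wordProd_eq_and_length_mul_eq {x : W}
    (hx : ∀ u ∈ Subgroup.closure (cs.simple '' J), ℓ x ≤ ℓ (x * u))
    {u : W} (hu : u ∈ Subgroup.closure (cs.simple '' J)) :
    ∃ ω : List B, (∀ b ∈ ω, b ∈ J) ∧ π ω = u ∧ ℓ (x * u) = ℓ x + ω.length := by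
  obtain ⟨ω, hω, rfl⟩ := cs.exists_wordProd_eq_of_mem_closure hu
  clear hu
  induction h : ω.length using Nat.strong_induction_on generalizing ω with
  | _ n ih =>
    by_cases hlt : ℓ (x * π ω) < ℓ x + ω.length
    · obtain ⟨ω', hω', hω'π, hω'len⟩ :=
        cs.exists_shorter_word_of_length_mul_wordProd_lt hx hω hlt
      obtain ⟨ω'', hω'', hω''π, hω''len⟩ := ih _ (h ▸ hω'len) ω' hω' rfl
      exact ⟨ω'', hω'', hω''π.trans hω'π, hω'π ▸ hω''len⟩
    · refine ⟨ω, hω, rfl, le_antisymm ?_ (not_lt.mp hlt)⟩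
      exact (cs.length_mul_le _ _).trans (Nat.add_le_add_left (cs.length_wordProd_le ω) _)

end Parabolic

end CoxeterSystem

theorem minimal_coset_rep_conj_simple_subset_general
    {B W : Type*} [Group W] {M : CoxeterMatrix B} (cs : CoxeterSystem M W)
    (J K : Set B) (w x y : W)
    (hwK : ∀ k ∈ K, ∃ j ∈ J, w⁻¹ * cs.simple k * w = cs.simple j)
    (hxK : ∀ u ∈ Subgroup.closure (cs.simple '' K), cs.length x ≤ cs.length (u * x))
    (hxJ : ∀ u ∈ Subgroup.closure (cs.simple '' J), cs.length x ≤ cs.length (x * u))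
    (hy : y ∈ Subgroup.closure (cs.simple '' J))
    (hxy : w = x * y) :
    ∀ k ∈ K, ∃ j ∈ J, x⁻¹ * cs.simple k * x = cs.simple j := by
  intro k hk
  obtain ⟨j, hj, hwk⟩ := hwK k hk
  have hmem : x⁻¹ * cs.simple k * x ∈ Subgroup.closure (cs.simple '' J) := by
    have : x⁻¹ * cs.simple k * x = y * cs.simple j * y⁻¹ := by rw [← hwk, hxy]; group
    exact this ▸ mul_mem (mul_mem hy (Subgroup.subset_closure ⟨j, hj, rfl⟩)) (inv_mem hy)
  have hlen : cs.length (x * (x⁻¹ * cs.simple k * x)) = cs.length x + 1 := by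
    have := hxK _ (Subgroup.subset_closure ⟨k, hk, rfl⟩)
    rw [← mul_assoc, mul_inv_cancel_left]
    rcases cs.length_simple_mul x k with h | h <;> omega
  obtain ⟨ω, hω, hωπ, hωlen⟩ := cs.exists_wordProd_eq_and_length_mul_eq hxJ hmem
  obtain ⟨j', rfl⟩ := List.length_eq_one_iff.mp (by omega : ω.length = 1)
  exact ⟨j', hω j' (List.mem_singleton_self j'), by rw [← hωπ, wordProd_singleton]⟩

/-- Lemma 1.3(1): if `w` is minimal in `W_K w`, `w⁻¹ K w ⊆ J`, and `w = x y` with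
`x ∈ ᴷW^J` and `y ∈ W_J`, then `x⁻¹ K x ⊆ J`. -/
theorem minimal_coset_rep_conj_simple_subset
    {B W : Type*} [Group W] {M : CoxeterMatrix B} (cs : CoxeterSystem M W)
    (J K : Set B) (w x y : W)
    (hwmin : ∀ u ∈ Subgroup.closure (cs.simple '' K), cs.length w ≤ cs.length (u * w))
    (hwK : ∀ k ∈ K, ∃ j ∈ J, w⁻¹ * cs.simple k * w = cs.simple j)
    (hxK : ∀ u ∈ Subgroup.closure (cs.simple '' K), cs.length x ≤ cs.length (u * x))
    (hxJ : ∀ u ∈ Subgroup.closure (cs.simple '' J), cs.length x ≤ cs.length (x * u))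
    (hy : y ∈ Subgroup.closure (cs.simple '' J))
    (hxy : w = x * y) :
    ∀ k ∈ K, ∃ j ∈ J, x⁻¹ * cs.simple k * x = cs.simple j :=
  minimal_coset_rep_conj_simple_subset_general cs J K w x y hwK hxK hxJ hy hxy
end

section
/- Let (W, I) be a Coxeter group and let u, w ∈ W. The set {v w : v ≤ u} (where ≤ is Bruhat order) contains a unique minimal element y with respect to Bruhat order; moreover ℓ(y) = ℓ(w) − ℓ(y w⁻¹). -/
open CoxeterSystem

variable {B W : Type*} [Group W] {M : CoxeterMatrix B}

/-- Bruhat order on a Coxeter group: `u ≤ w` iff some reduced word of `w` admits a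
subword whose product is `u`. -/
def BruhatLE (cs : CoxeterSystem M W) (u w : W) : Prop :=
  ∃ ω : List B, cs.IsReduced ω ∧ w = cs.wordProd ω ∧
    ∃ ω' : List B, ω'.Sublist ω ∧ u = cs.wordProd ω'

/-!
Write `u = s u₁` with `ℓ u₁ < ℓ u`. By the lifting property of the Bruhat order,
`{v | v ≤ u} = {v | v ≤ u₁} ∪ s • {v | v ≤ u₁}`, so if `y₁` is the least element of
`{v w | v ≤ u₁}`, the smaller of `y₁` and `s y₁` is the least element of `{v w | v ≤ u}`.
Passing from `y₁` to `s y₁` only when this lowers the length preserves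
`ℓ y + ℓ (y w⁻¹) ≤ ℓ w`; the reverse inequality is the triangle inequality.

The lifting property needs the subword property for *every* reduced word of `u`, which comes from
the description of the Bruhat order by reflection chains. That in turn rests on the strong
exchange condition, proved with Tits' sign action of `W` on `W × {±1}`.
-/

namespace CoxeterSystem

open List

variable (cs : CoxeterSystem M W)

local prefix:100 "s " => cs.simple
local prefix:100 "π " => cs.wordProd
local prefix:100 "ℓ " => cs.length
local prefix:100 "lis " => cs.leftInvSeq

theorem leftInvSeq_alternatingWord (i j : B) (p : ℕ) :
    lis (alternatingWord i j (2 * p)) =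
      (range (2 * p)).map fun k => π alternatingWord j i (2 * k + 1) := by
  refine ext_getElem (by simp) fun k hk _ => ?_
  rw [getElem_leftInvSeq_alternatingWord cs i j p k (by simpa using hk)]
  simp

theorem wordProd_alternatingWord_add_two_mul (i j : B) (k : ℕ) :
    π alternatingWord i j (k + 2 * M i j) = π alternatingWord i j k := by
  rw [prod_alternatingWord_eq_mul_pow, prod_alternatingWord_eq_mul_pow,
    show (k + 2 * M i j) / 2 = k / 2 + M i j by omega]
  simp [pow_add, Nat.even_add]

section SignCocycle

variable [DecidableEq W]

def simpleSignPerm (i : B) : Equiv.Perm (W × ℤˣ) :=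
  Function.Involutive.toPerm (fun p => (s i * p.1 * s i, if p.1 = s i then -p.2 else p.2)) <| by
    rintro ⟨t, ε⟩
    by_cases h : t = s i <;> simp [h, mul_assoc, mul_eq_one_iff_eq_inv]

theorem simpleSignPerm_apply (i : B) (t : W) (ε : ℤˣ) :
    cs.simpleSignPerm i (t, ε) = (s i * t * s i, if t = s i then -ε else ε) := rfl

def wordSignPerm (ω : List B) : Equiv.Perm (W × ℤˣ) := (ω.map cs.simpleSignPerm).prod

theorem wordSignPerm_apply (ω : List B) (t : W) (ε : ℤˣ) :
    cs.wordSignPerm ω (t, ε) =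
      (π ω * t * (π ω)⁻¹, (-1) ^ (lis ω).count (π ω * t * (π ω)⁻¹) * ε) := by
  induction ω generalizing t ε with
  | nil => simp [wordSignPerm]
  | cons i ω ih =>
    have hconj : π (i :: ω) * t * (π (i :: ω))⁻¹ = s i * (π ω * t * (π ω)⁻¹) * s i := by
      simp [wordProd_cons, mul_assoc]
    have hcount (x : W) : (lis (i :: ω)).count (s i * x * s i) =
        (lis ω).count x + if x = s i then 1 else 0 := by
      have hx : s i * x * s i = MulAut.conj (s i) x := by simp
      rw [leftInvSeq, count_cons, hx, count_map_of_injective _ _ (MulAut.conj (s i)).injective]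
      simp [mul_assoc, eq_comm (a := s i), mul_eq_one_iff_eq_inv]
    simp only [wordSignPerm, map_cons, prod_cons, Equiv.Perm.mul_apply] at ih ⊢
    rw [ih, hconj, hcount]
    by_cases h : π ω * t * (π ω)⁻¹ = s i <;> simp [simpleSignPerm_apply, h, pow_succ]

theorem wordSignPerm_alternatingWord_two_mul (i j : B) (m : ℕ) :
    cs.wordSignPerm (alternatingWord i j (2 * m)) =
      (cs.simpleSignPerm i * cs.simpleSignPerm j) ^ m := by
  induction m with
  | zero => simp [alternatingWord, wordSignPerm]
  | succ m ih =>
    have hword : alternatingWord i j (2 * (m + 1)) = i :: j :: alternatingWord i j (2 * m) := by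
      rw [show 2 * (m + 1) = 2 * m + 1 + 1 by ring, alternatingWord_succ', alternatingWord_succ']
      simp
    rw [hword, pow_succ', ← ih]
    simp [wordSignPerm, mul_assoc]

theorem even_count_leftInvSeq_braidWord (i j : B) (t : W) :
    Even ((lis (alternatingWord i j (2 * M i j))).count t) := by
  have hperiod (k : ℕ) : π alternatingWord j i (2 * (M i j + k) + 1) =
      π alternatingWord j i (2 * k + 1) := by
    rw [show 2 * (M i j + k) + 1 = 2 * k + 1 + 2 * M j i by rw [M.symmetric]; ring,
      wordProd_alternatingWord_add_two_mul]
  rw [leftInvSeq_alternatingWord, two_mul, range_add, map_append, map_map, count_append]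
  simp only [Function.comp_def, hperiod]
  exact ⟨_, rfl⟩

theorem isLiftable_simpleSignPerm : M.IsLiftable cs.simpleSignPerm := by
  intro i j
  rw [← wordSignPerm_alternatingWord_two_mul]
  ext ⟨t, ε⟩ : 1
  have hone : π alternatingWord i j (2 * M i j) = 1 := by
    simpa [alternatingWord] using wordProd_alternatingWord_add_two_mul cs i j 0
  rw [wordSignPerm_apply, hone, one_mul, inv_one, mul_one,
    (even_count_leftInvSeq_braidWord cs i j t).neg_one_pow]
  simp

def signRep : W →* Equiv.Perm (W × ℤˣ) := cs.lift ⟨_, cs.isLiftable_simpleSignPerm⟩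

theorem signRep_wordProd (ω : List B) : cs.signRep (π ω) = cs.wordSignPerm ω := by
  simp [signRep, wordProd, wordSignPerm, map_list_prod, Function.comp_def]

/-- The reflection cocycle: `invSign w t = -1` exactly when `t` is a left inversion of `w`. -/
def invSign (w t : W) : ℤˣ := (cs.signRep w (w⁻¹ * t * w, 1)).2

theorem invSign_wordProd (ω : List B) (t : W) :
    cs.invSign (π ω) t = (-1) ^ (lis ω).count t := by
  simp [invSign, signRep_wordProd, wordSignPerm_apply, mul_assoc]

theorem signRep_apply (w t : W) (ε : ℤˣ) :
    cs.signRep w (t, ε) = (w * t * w⁻¹, cs.invSign w (w * t * w⁻¹) * ε) := by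
  obtain ⟨ω, rfl⟩ := cs.wordProd_surjective w
  simp [signRep_wordProd, wordSignPerm_apply, invSign_wordProd]

theorem invSign_mul (w w' t : W) :
    cs.invSign (w * w') t = cs.invSign w t * cs.invSign w' (w⁻¹ * t * w) := by
  have hconj : w' * ((w * w')⁻¹ * t * (w * w')) * w'⁻¹ = w⁻¹ * t * w := by group
  rw [invSign, map_mul, Equiv.Perm.mul_apply, signRep_apply cs w', hconj, signRep_apply cs w]
  simp [mul_assoc]

theorem invSign_one (t : W) : cs.invSign 1 t = 1 := by
  simpa using cs.invSign_wordProd [] t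

theorem invSign_eq_one {w t : W} (h : ¬cs.IsLeftInversion w t) : cs.invSign w t = 1 := by
  obtain ⟨ω, hω, rfl⟩ := cs.exists_isReduced w
  rw [invSign_wordProd, count_eq_zero.2 fun ht => h (cs.isLeftInversion_of_mem_leftInvSeq hω ht),
    pow_zero]

theorem invSign_self {t : W} (ht : cs.IsReflection t) : cs.invSign t t = -1 := by
  obtain ⟨u, i, rfl⟩ := ht
  have hs : cs.invSign (s i) (s i) = -1 := by simpa using cs.invSign_wordProd [i] (s i)
  set t := u * s i * u⁻¹ with ht_def
  have hconj : u⁻¹ * t * u = s i := by rw [ht_def]; group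
  have hcancel : cs.invSign u t * cs.invSign u⁻¹ (s i) = 1 := by
    have := cs.invSign_mul u u⁻¹ t
    rwa [mul_inv_cancel, invSign_one, hconj, eq_comm] at this
  calc cs.invSign t t = cs.invSign (u * (s i * u⁻¹)) t := by rw [ht_def, mul_assoc]
    _ = cs.invSign u t * (cs.invSign (s i) (s i) * cs.invSign u⁻¹ ((s i)⁻¹ * s i * s i)) := by
      rw [invSign_mul, invSign_mul, hconj]
    _ = -1 := by rw [hs, inv_mul_cancel, one_mul, neg_one_mul, mul_neg, hcancel]

theorem invSign_of_isLeftInversion {w t : W} (h : cs.IsLeftInversion w t) :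
    cs.invSign w t = -1 := by
  have hw : t * (t * w) = w := by rw [← mul_assoc, h.1.mul_self, one_mul]
  have hconj : t⁻¹ * t * t = t := by group
  have := cs.invSign_mul t (t * w) t
  rw [hw, invSign_self cs h.1, hconj,
    invSign_eq_one cs (h.1.not_isLeftInversion_mul_right_iff.2 h), mul_one] at this
  exact this

end SignCocycle

theorem mem_leftInvSeq_of_isLeftInversion {ω : List B} {t : W}
    (h : cs.IsLeftInversion (π ω) t) : t ∈ lis ω := by
  classical
  by_contra hmem
  have := cs.invSign_of_isLeftInversion h
  rw [invSign_wordProd, count_eq_zero.2 hmem, pow_zero] at this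
  exact absurd this (by decide)

theorem exists_eraseIdx_of_isLeftInversion {ω : List B} {t : W}
    (h : cs.IsLeftInversion (π ω) t) : ∃ j < ω.length, t * π ω = π (ω.eraseIdx j) := by
  obtain ⟨j, hj, rfl⟩ := List.mem_iff_getElem.mp (cs.mem_leftInvSeq_of_isLeftInversion h)
  exact ⟨j, by simpa using hj, by rw [← getD_eq_getElem _ 1 hj, getD_leftInvSeq_mul_wordProd]⟩

theorem isReduced_cons_iff {i : B} {ω : List B} :
    cs.IsReduced (i :: ω) ↔ cs.IsReduced ω ∧ ℓ (π ω) < ℓ (s i * π ω) := by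
  unfold IsReduced
  rw [wordProd_cons, length_cons]
  have := cs.length_wordProd_le ω
  rcases cs.length_simple_mul (π ω) i with h | h <;> omega

theorem exists_reduced_sublist (ω : List B) : ∃ η, η <+ ω ∧ cs.IsReduced η ∧ π η = π ω := by
  induction ω with
  | nil => exact ⟨[], Sublist.refl _, by simp [IsReduced], rfl⟩
  | cons i ω ih =>
    obtain ⟨η, hη, hred, hπ⟩ := ih
    rw [wordProd_cons, ← hπ]
    by_cases hlt : ℓ (π η) < ℓ (s i * π η)
    · exact ⟨i :: η, hη.cons_cons i, cs.isReduced_cons_iff.2 ⟨hred, hlt⟩, wordProd_cons ..⟩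
    · have hdesc : cs.IsLeftInversion (π η) (s i) :=
        ⟨cs.isReflection_simple i, by have := cs.length_simple_mul_ne (π η) i; omega⟩
      obtain ⟨j, hj, herase⟩ := cs.exists_eraseIdx_of_isLeftInversion hdesc
      refine ⟨η.eraseIdx j, (eraseIdx_sublist η j).trans (hη.trans (sublist_cons_self i ω)), ?_,
        herase.symm⟩
      have hlen := cs.length_wordProd_le (η.eraseIdx j)
      unfold IsReduced at hred ⊢
      rw [length_eraseIdx_of_lt hj] at hlen ⊢
      rw [← herase]
      rcases cs.length_simple_mul (π η) i with h | h <;> omega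

def BruhatChain (x y : W) : Prop :=
  Relation.ReflTransGen (fun a b => ∃ t, cs.IsReflection t ∧ b = t * a ∧ ℓ a < ℓ b) x y

theorem bruhatChain_reflection_mul {x t : W} (ht : cs.IsReflection t) (h : ℓ x < ℓ (t * x)) :
    cs.BruhatChain x (t * x) :=
  .single ⟨t, ht, rfl, h⟩

theorem bruhatChain_simple_mul {x : W} {i : B} (h : ℓ x < ℓ (s i * x)) :
    cs.BruhatChain x (s i * x) :=
  cs.bruhatChain_reflection_mul (cs.isReflection_simple i) h

theorem simple_mul_bruhatChain {x : W} {i : B} (h : ℓ (s i * x) < ℓ x) :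
    cs.BruhatChain (s i * x) x := by
  simpa using cs.bruhatChain_simple_mul (i := i) (x := s i * x) (by simpa using h)

variable {cs} in
theorem BruhatChain.trans {x y z : W} (hxy : cs.BruhatChain x y) (hyz : cs.BruhatChain y z) :
    cs.BruhatChain x z :=
  Relation.ReflTransGen.trans hxy hyz

variable {cs} in
theorem BruhatChain.eq_or_length_lt {x y : W} (h : cs.BruhatChain x y) : x = y ∨ ℓ x < ℓ y := by
  induction h with
  | refl => exact .inl rfl
  | tail _ hstep ih =>
    obtain ⟨t, -, rfl, hlt⟩ := hstep
    rcases ih with rfl | ih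
    exacts [.inr hlt, .inr (ih.trans hlt)]

variable {cs} in
theorem BruhatChain.exists_reduced_sublist {x u : W} (h : cs.BruhatChain x u) {ω : List B}
    (hω : cs.IsReduced ω) (hu : π ω = u) : ∃ η, η <+ ω ∧ cs.IsReduced η ∧ π η = x := by
  induction h generalizing ω with
  | refl => exact ⟨ω, Sublist.refl ω, hω, hu⟩
  | tail _ hstep ih =>
    obtain ⟨t, ht, rfl, hlt⟩ := hstep
    have hinv : cs.IsLeftInversion (π ω) t := ⟨ht, by rwa [hu, ← mul_assoc, ht.mul_self, one_mul]⟩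
    obtain ⟨j, -, herase⟩ := cs.exists_eraseIdx_of_isLeftInversion hinv
    obtain ⟨η', hη', hred', hπ'⟩ := cs.exists_reduced_sublist (ω.eraseIdx j)
    obtain ⟨η, hη, hred, hπ⟩ :=
      ih hred' (by rw [hπ', ← herase, hu, ← mul_assoc, ht.mul_self, one_mul])
    exact ⟨η, hη.trans (hη'.trans (eraseIdx_sublist ω j)), hred, hπ⟩

theorem bruhatChain_simple_mul_of_step {b t : W} (ht : cs.IsReflection t) (hb : ℓ b < ℓ (t * b))
    (i : B) : cs.BruhatChain (s i * b) (t * b) ∨ cs.BruhatChain (s i * b) (s i * (t * b)) := by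
  by_cases hdown : ℓ (s i * b) < ℓ b
  · exact .inl ((cs.simple_mul_bruhatChain hdown).trans (cs.bruhatChain_reflection_mul ht hb))
  have hconj : s i * t * s i * (s i * b) = s i * (t * b) := by simp [mul_assoc]
  have ht' : cs.IsReflection (s i * t * s i) := by simpa using ht.conj (s i)
  by_cases hlt : ℓ (s i * b) < ℓ (s i * (t * b))
  · exact .inr (hconj ▸ cs.bruhatChain_reflection_mul ht' (hconj ▸ hlt))
  -- Otherwise `t = s i`: exchange `t` into a reduced word of `t * b` beginning with `i`.
  suffices h : s i * b = t * b from .inl (h ▸ .refl)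
  have hne := ht'.length_mul_right_ne (s i * b)
  rw [hconj] at hne
  have hb' := cs.length_simple_mul b i
  have htb := cs.length_simple_mul (t * b) i
  obtain ⟨β, hβ, hβu⟩ := cs.exists_isReduced (s i * (t * b))
  have hπ : π (i :: β) = t * b := by rw [wordProd_cons, ← hβu, simple_mul_simple_cancel_left]
  have hinv : cs.IsLeftInversion (π (i :: β)) t :=
    ⟨ht, by rwa [hπ, ← mul_assoc, ht.mul_self, one_mul]⟩
  obtain ⟨_ | k, hj, herase⟩ := cs.exists_eraseIdx_of_isLeftInversion hinv
  all_goals rw [hπ, ← mul_assoc, ht.mul_self, one_mul] at herase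
  · nth_rw 1 [herase]
    rw [eraseIdx_cons_zero, ← hβu, simple_mul_simple_cancel_left]
  · rw [eraseIdx_cons_succ, wordProd_cons] at herase
    have hlen := cs.length_wordProd_le (β.eraseIdx k)
    rw [length_eraseIdx_of_lt (by simpa using hj), ← simple_mul_simple_cancel_left cs i (w := π _),
      ← herase] at hlen
    have := hβ.eq
    rw [← hβu] at this
    omega

variable {cs} in
theorem BruhatChain.simple_mul_or {x u : W} (h : cs.BruhatChain x u) (i : B) :
    cs.BruhatChain (s i * x) u ∨ cs.BruhatChain (s i * x) (s i * u) := by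
  induction h with
  | refl => exact .inr .refl
  | tail _ hstep ih =>
    obtain ⟨t, ht, rfl, hlt⟩ := hstep
    rcases ih with ih | ih
    · exact .inl (ih.trans (cs.bruhatChain_reflection_mul ht hlt))
    · rcases cs.bruhatChain_simple_mul_of_step ht hlt i with h | h
      exacts [.inl (ih.trans h), .inr (ih.trans h)]

theorem bruhatChain_of_sublist {ω η : List B} (hω : cs.IsReduced ω) (h : η <+ ω) :
    cs.BruhatChain (π η) (π ω) := by
  induction ω generalizing η with
  | nil => rw [sublist_nil.1 h]; exact .refl
  | cons i ω ih =>
    obtain ⟨hω, hlt⟩ := cs.isReduced_cons_iff.1 hω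
    have hstep := cs.bruhatChain_simple_mul hlt
    rw [wordProd_cons]
    rcases sublist_cons_iff.1 h with h | ⟨η, rfl, h'⟩
    · exact (ih hω h).trans hstep
    · rw [wordProd_cons]
      rcases (ih hω h').simple_mul_or i with hle | hle
      exacts [hle.trans hstep, hle]

noncomputable def minSimpleMul (i : B) (x : W) : W := if ℓ (s i * x) < ℓ x then s i * x else x

theorem minSimpleMul_eq_or (i : B) (x : W) :
    cs.minSimpleMul i x = x ∨ cs.minSimpleMul i x = s i * x := by
  unfold minSimpleMul
  split_ifs <;> simp

theorem length_minSimpleMul_add_length_mul_le (i : B) (x w : W) :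
    ℓ (cs.minSimpleMul i x) + ℓ (cs.minSimpleMul i x * w) ≤ ℓ x + ℓ (x * w) := by
  unfold minSimpleMul
  split_ifs with h
  · have := cs.length_mul_le (s i) (x * w)
    rw [length_simple, ← mul_assoc] at this
    have := cs.length_simple_mul x i
    omega
  · exact le_rfl

end CoxeterSystem

section BruhatOrder

variable (cs : CoxeterSystem M W)

local prefix:100 "s " => cs.simple
local prefix:100 "π " => cs.wordProd
local prefix:100 "ℓ " => cs.length

open List

theorem bruhatLE_iff_bruhatChain {x u : W} : BruhatLE cs x u ↔ cs.BruhatChain x u := by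
  constructor
  · rintro ⟨ω, hω, rfl, η, hη, rfl⟩
    exact cs.bruhatChain_of_sublist hω hη
  · intro h
    obtain ⟨ω, hω, rfl⟩ := cs.exists_isReduced u
    obtain ⟨η, hη, -, rfl⟩ := h.exists_reduced_sublist hω rfl
    exact ⟨ω, hω, rfl, η, hη, rfl⟩

theorem bruhatLE_refl (x : W) : BruhatLE cs x x := by
  obtain ⟨ω, hω, rfl⟩ := cs.exists_isReduced x
  exact ⟨ω, hω, rfl, ω, .refl ω, rfl⟩

variable {cs}

theorem BruhatLE.trans {x y z : W} (hxy : BruhatLE cs x y) (hyz : BruhatLE cs y z) :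
    BruhatLE cs x z := by
  rw [bruhatLE_iff_bruhatChain] at *
  exact hxy.trans hyz

theorem BruhatLE.length_le {x u : W} (h : BruhatLE cs x u) : ℓ x ≤ ℓ u := by
  obtain ⟨ω, hω, rfl, η, hη, rfl⟩ := h
  exact (cs.length_wordProd_le η).trans (hη.length_le.trans hω.eq.ge)

theorem BruhatLE.antisymm {x y : W} (hxy : BruhatLE cs x y) (hyx : BruhatLE cs y x) : x = y :=
  ((bruhatLE_iff_bruhatChain cs).1 hxy).eq_or_length_lt.resolve_right (not_lt.2 hyx.length_le)

theorem BruhatLE.exists_reduced_sublist {x u : W} (h : BruhatLE cs x u) {ω : List B}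
    (hω : cs.IsReduced ω) (hu : π ω = u) : ∃ η, η <+ ω ∧ cs.IsReduced η ∧ π η = x :=
  ((bruhatLE_iff_bruhatChain cs).1 h).exists_reduced_sublist hω hu

theorem bruhatLE_simple_mul {x : W} {i : B} (h : ℓ x < ℓ (s i * x)) :
    BruhatLE cs x (s i * x) :=
  (bruhatLE_iff_bruhatChain cs).2 (cs.bruhatChain_simple_mul h)

theorem simple_mul_bruhatLE {x : W} {i : B} (h : ℓ (s i * x) < ℓ x) :
    BruhatLE cs (s i * x) x :=
  (bruhatLE_iff_bruhatChain cs).2 (cs.simple_mul_bruhatChain h)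

theorem BruhatLE.simple_mul_simple_mul {x u : W} (h : BruhatLE cs x u) {i : B}
    (hu : ℓ u < ℓ (s i * u)) : BruhatLE cs (s i * x) (s i * u) := by
  obtain ⟨ω, hω, rfl, η, hη, rfl⟩ := h
  exact ⟨i :: ω, cs.isReduced_cons_iff.2 ⟨hω, hu⟩, (wordProd_cons ..).symm, i :: η,
    hη.cons_cons i, (wordProd_cons ..).symm⟩

theorem BruhatLE.le_simple_mul {x u : W} (h : BruhatLE cs x u) {i : B}
    (hx : ℓ x < ℓ (s i * x)) : BruhatLE cs x (s i * u) := by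
  rcases cs.length_simple_mul u i with hu | hu
  · exact h.trans (bruhatLE_simple_mul (by omega))
  obtain ⟨β, hβ, hβu⟩ := cs.exists_isReduced (s i * u)
  have hred : cs.IsReduced (i :: β) :=
    cs.isReduced_cons_iff.2 ⟨hβ, by rw [← hβu, simple_mul_simple_cancel_left]; omega⟩
  obtain ⟨η, hη, hηred, rfl⟩ :=
    h.exists_reduced_sublist hred (by rw [wordProd_cons, ← hβu, simple_mul_simple_cancel_left])
  rcases sublist_cons_iff.1 hη with hη | ⟨η₁, rfl, hη₁⟩
  · exact ⟨β, hβ, hβu, η, hη, rfl⟩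
  · rw [wordProd_cons, simple_mul_simple_cancel_left] at hx
    have := cs.length_wordProd_le η₁
    have := hηred.eq
    simp only [wordProd_cons, length_cons] at this
    omega

theorem minSimpleMul_bruhatLE (i : B) (x : W) : BruhatLE cs (cs.minSimpleMul i x) x := by
  unfold minSimpleMul
  split_ifs with h
  exacts [simple_mul_bruhatLE h, bruhatLE_refl cs x]

theorem BruhatLE.minSimpleMul_le {x u : W} (h : BruhatLE cs x u) (i : B) :
    BruhatLE cs (cs.minSimpleMul i x) (s i * u) := by
  unfold minSimpleMul
  split_ifs with hx
  · exact ((simple_mul_bruhatLE hx).trans h).le_simple_mul (by rwa [simple_mul_simple_cancel_left])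
  · exact h.le_simple_mul (by have := cs.length_simple_mul_ne x i; omega)

theorem exists_least_bruhatLE_mul {ω : List B} (hω : cs.IsReduced ω) (w : W) :
    ∃ y, (∃ v, BruhatLE cs v (π ω) ∧ y = v * w) ∧
      (∀ v, BruhatLE cs v (π ω) → BruhatLE cs y (v * w)) ∧ ℓ y + ℓ (y * w⁻¹) ≤ ℓ w := by
  induction ω with
  | nil =>
    refine ⟨w, ⟨1, bruhatLE_refl cs 1, (one_mul w).symm⟩, fun v hv => ?_, by simp⟩
    obtain rfl : v = 1 := cs.length_eq_zero_iff.1 (by simpa using hv.length_le)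
    rw [one_mul]
    exact bruhatLE_refl cs w
  | cons i ω ih =>
    obtain ⟨hω, hlt⟩ := cs.isReduced_cons_iff.1 hω
    obtain ⟨_, ⟨v, hv, rfl⟩, hmin, hlen⟩ := ih hω
    rw [wordProd_cons]
    refine ⟨cs.minSimpleMul i (v * w), ?_, fun v' hv' => ?_,
      (cs.length_minSimpleMul_add_length_mul_le i _ _).trans hlen⟩
    · rcases cs.minSimpleMul_eq_or i (v * w) with h | h <;> rw [h]
      · exact ⟨v, hv.trans (bruhatLE_simple_mul hlt), rfl⟩
      · exact ⟨s i * v, hv.simple_mul_simple_mul hlt, (mul_assoc ..).symm⟩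
    · have hv'' := hv'.minSimpleMul_le i
      rw [simple_mul_simple_cancel_left] at hv''
      rcases cs.minSimpleMul_eq_or i v' with h | h <;> rw [h] at hv''
      · exact (minSimpleMul_bruhatLE i _).trans (hmin _ hv'')
      · simpa [mul_assoc] using (hmin _ hv'').minSimpleMul_le i

end BruhatOrder

/-- Lemma 1.4(1): the set `{v w ; v ≤ u}` contains a unique minimal element `y` for the
Bruhat order, and `ℓ(y) = ℓ(w) - ℓ(y w⁻¹)`. -/
theorem exists_unique_min_of_bruhat_interval_mul
    (cs : CoxeterSystem M W) (u w : W) :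
    ∃ y : W, (∃ v : W, BruhatLE cs v u ∧ y = v * w) ∧
      (∀ z : W, (∃ v : W, BruhatLE cs v u ∧ z = v * w) → BruhatLE cs y z) ∧
      (∀ y' : W, (∃ v : W, BruhatLE cs v u ∧ y' = v * w) →
        (∀ z : W, (∃ v : W, BruhatLE cs v u ∧ z = v * w) → BruhatLE cs y' z) → y' = y) ∧
      cs.length y + cs.length (y * w⁻¹) = cs.length w := by
  obtain ⟨ω, hω, rfl⟩ := cs.exists_isReduced u
  obtain ⟨y, hy, hmin, hlen⟩ := exists_least_bruhatLE_mul hω w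
  have hleast : ∀ z, (∃ v, BruhatLE cs v (cs.wordProd ω) ∧ z = v * w) → BruhatLE cs y z := by
    rintro z ⟨v, hv, rfl⟩
    exact hmin v hv
  refine ⟨y, hy, hleast, fun y' hy' hleast' => (hleast' y hy).antisymm (hleast y' hy'), ?_⟩
  have := cs.length_le_length_mul_add_left (y * w⁻¹) w
  rw [inv_mul_cancel_right] at this
  omega
end

section
/- Let (W, I) be a Coxeter group, let J, J' ⊆ I with an isomorphism δ: W_J → W_{J'} satisfying δ(J) = J', and let w ∈ W_J and x ∈ W^J (minimal coset representative of xW_J). Then ℓ(x w δ(x)⁻¹) ≥ ℓ(w). In particular, if J = δ(J) = J' and w has minimal length in its δ|_J-twisted conjugacy class in W_J, then w has minimal length in its δ-twisted conjugacy class in W (when δ extends to W). -/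
/-!
Tits' representation of `W` on `W × ZMod 2`, in which `s i` sends `(t, ε)` to
`(s i * t * s i, ε + [t = s i])`, shows that the parity of the number of occurrences of `t` in the
right inversion sequence of a word depends only on the product of the word. This gives the
exchange condition, hence `ℓ (x * u) = ℓ x + ℓ u` for `u ∈ W_J` when `x` is of minimal length in
`x W_J`, and so `ℓ (x * w * (σ x)⁻¹) ≥ ℓ (x * w) - ℓ (σ x) = ℓ w`. For the second claim write
`a = x * u⁻¹` with `x` of minimal length in `a W_J`: then `a * w * (σ a)⁻¹ = x * w' * (σ x)⁻¹`
for the `σ`-twisted conjugate `w' = u⁻¹ * w * σ u` of `w`, which lies in `W_J`.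
-/

theorem conj_eq_iff {G : Type*} [Group G] {a t b : G} :
    a * t * a⁻¹ = b ↔ t = a⁻¹ * b * a := by
  rw [mul_inv_eq_iff_eq_mul, mul_assoc, ← eq_inv_mul_iff_mul_eq]

namespace CoxeterSystem

open Finset

variable {B W : Type*} [Group W] {M : CoxeterMatrix B} (cs : CoxeterSystem M W)

theorem simple_mul_pow_simple_mul_simple (i i' : B) (k : ℕ) :
    cs.simple i' * (cs.simple i * cs.simple i') ^ k =
      ((cs.simple i * cs.simple i') ^ k)⁻¹ * cs.simple i' := by
  have h := conj_pow (a := cs.simple i') (b := cs.simple i * cs.simple i') (i := k)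
  rw [cs.inv_simple, ← mul_assoc, cs.simple_mul_simple_cancel_right] at h
  rw [← inv_pow, mul_inv_rev, cs.inv_simple, cs.inv_simple, h,
    cs.simple_mul_simple_cancel_right]

section ReflectionRepresentation

variable [DecidableEq W]

def reflectionPerm (i : B) : Equiv.Perm (W × ZMod 2) :=
  Function.Involutive.toPerm
    (fun p => (cs.simple i * p.1 * cs.simple i, p.2 + if p.1 = cs.simple i then 1 else 0))
    (by
      rintro ⟨t, ε⟩
      have h : cs.simple i * t * cs.simple i = cs.simple i ↔ t = cs.simple i := by
        nth_rw 2 [← cs.inv_simple i]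
        rw [conj_eq_iff, cs.inv_simple, cs.simple_mul_simple_cancel_right]
      simp only [h, add_assoc, CharTwo.add_self_eq_zero, add_zero, ← mul_assoc,
        cs.simple_mul_simple_self, one_mul, cs.simple_mul_simple_cancel_right])

theorem reflectionPerm_apply (i : B) (t : W) (ε : ZMod 2) :
    cs.reflectionPerm i (t, ε) =
      (cs.simple i * t * cs.simple i, ε + if t = cs.simple i then 1 else 0) := rfl

theorem reflectionPerm_mul_pow_apply (i i' : B) (k : ℕ) (t : W) (ε : ZMod 2) :
    ((cs.reflectionPerm i * cs.reflectionPerm i') ^ k) (t, ε) =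
      ((cs.simple i * cs.simple i') ^ k * t * ((cs.simple i * cs.simple i') ^ k)⁻¹,
        ε + ∑ j ∈ range (2 * k),
          if t = ((cs.simple i * cs.simple i') ^ j)⁻¹ * cs.simple i' then 1 else 0) := by
  induction k with
  | zero => simp
  | succ k ih =>
    set r := cs.simple i * cs.simple i'
    rw [pow_succ', Equiv.Perm.mul_apply, Equiv.Perm.mul_apply, ih, reflectionPerm_apply,
      reflectionPerm_apply]
    have hs : ∀ n, cs.simple i' * r ^ n = (r ^ n)⁻¹ * cs.simple i' :=
      cs.simple_mul_pow_simple_mul_simple i i'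
    have hconj : ∀ j, (r ^ k)⁻¹ * ((r ^ j)⁻¹ * cs.simple i') * r ^ k =
        (r ^ (2 * k + j))⁻¹ * cs.simple i' := by
      intro j
      simp only [mul_assoc]
      rw [hs]
      group
    have h₁ : r ^ k * t * (r ^ k)⁻¹ = cs.simple i' ↔ t = (r ^ (2 * k))⁻¹ * cs.simple i' := by
      rw [conj_eq_iff, ← add_zero (2 * k), ← hconj 0, pow_zero, inv_one, one_mul]
    have h₂ : cs.simple i' * (r ^ k * t * (r ^ k)⁻¹) * cs.simple i' = cs.simple i ↔
        t = (r ^ (2 * k + 1))⁻¹ * cs.simple i' := by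
      nth_rw 2 [← cs.inv_simple i']
      rw [conj_eq_iff, cs.inv_simple, conj_eq_iff, ← hconj 1, pow_one]
      simp only [r, mul_inv_rev, cs.inv_simple]
    rw [if_congr h₁ rfl rfl, if_congr h₂ rfl rfl, show 2 * (k + 1) = 2 * k + 1 + 1 by ring,
      sum_range_succ, sum_range_succ]
    ext
    · simp only [r, pow_succ', mul_inv_rev, cs.inv_simple, mul_assoc]
    · simp only [add_assoc]

-- With `r = s i * s i'`, the reflections `(r ^ j)⁻¹ * s i'` are `M i i'`-periodic in `j`, so
-- each of them is counted an even number of times.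
theorem isLiftable_reflectionPerm : M.IsLiftable cs.reflectionPerm := by
  intro i i'
  ext ⟨t, ε⟩ : 1
  rw [reflectionPerm_mul_pow_apply, cs.simple_mul_simple_pow, two_mul, sum_range_add]
  simp only [pow_add, cs.simple_mul_simple_pow, one_mul, inv_one, mul_one,
    CharTwo.add_self_eq_zero, add_zero]
  rfl

def reflectionRep : W →* Equiv.Perm (W × ZMod 2) :=
  cs.lift ⟨cs.reflectionPerm, cs.isLiftable_reflectionPerm⟩

theorem reflectionRep_wordProd_apply (ω : List B) (t : W) (ε : ZMod 2) :
    cs.reflectionRep (cs.wordProd ω) (t, ε) =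
      (cs.wordProd ω * t * (cs.wordProd ω)⁻¹, ε + (cs.rightInvSeq ω).count t) := by
  induction ω with
  | nil => simp [reflectionRep]
  | cons i ω ih =>
    rw [cs.wordProd_cons, map_mul, Equiv.Perm.mul_apply, ih, reflectionRep,
      cs.lift_apply_simple, reflectionPerm_apply, rightInvSeq, List.count_cons]
    ext
    · simp only [mul_inv_rev, cs.inv_simple, mul_assoc]
    · simp only [conj_eq_iff, beq_iff_eq, eq_comm (a := t), Nat.cast_add, Nat.cast_ite,
        Nat.cast_one, Nat.cast_zero, add_assoc]

theorem count_rightInvSeq_eq_of_wordProd_eq {ω ω' : List B} (h : cs.wordProd ω = cs.wordProd ω')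
    (t : W) : ((cs.rightInvSeq ω).count t : ZMod 2) = (cs.rightInvSeq ω').count t := by
  simpa [reflectionRep_wordProd_apply] using
    congrArg (fun g => (cs.reflectionRep g (t, 0)).2) h

end ReflectionRepresentation

theorem simple_mem_rightInvSeq_of_isRightDescent {ω : List B} {i : B}
    (h : cs.IsRightDescent (cs.wordProd ω) i) : cs.simple i ∈ cs.rightInvSeq ω := by
  classical
  -- `τ ++ [i]` with `τ` reduced for `π ω * s i` has the same product as `ω`, and `s i` occurs
  -- exactly once in its right inversion sequence.
  obtain ⟨τ, hτ, hτω⟩ := cs.exists_isReduced (cs.wordProd ω * cs.simple i)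
  have hτi : cs.wordProd (τ.concat i) = cs.wordProd ω := by
    rw [cs.wordProd_concat, ← hτω, cs.simple_mul_simple_cancel_right]
  have hτ_not_mem : cs.simple i ∉ (cs.rightInvSeq τ).map (MulAut.conj (cs.simple i)) := by
    rintro hmem
    obtain ⟨t, ht, hti⟩ := List.mem_map.mp hmem
    rw [MulAut.conj_apply, conj_eq_iff, cs.inv_simple, cs.simple_mul_simple_cancel_right] at hti
    have := (cs.isRightInversion_of_mem_rightInvSeq hτ (hti ▸ ht)).2
    rw [← hτω, cs.simple_mul_simple_cancel_right] at this
    exact h.not_gt this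
  have hcount : ((cs.rightInvSeq ω).count (cs.simple i) : ZMod 2) = 1 := by
    rw [← cs.count_rightInvSeq_eq_of_wordProd_eq hτi, rightInvSeq_concat, List.concat_eq_append,
      List.count_append, List.count_eq_zero_of_not_mem hτ_not_mem, List.count_singleton_self]
    rfl
  by_contra hmem
  rw [List.count_eq_zero_of_not_mem hmem] at hcount
  exact zero_ne_one hcount

theorem exists_wordProd_eraseIdx_eq_mul_simple {ω : List B} {i : B}
    (h : cs.IsRightDescent (cs.wordProd ω) i) :
    ∃ j < ω.length, cs.wordProd (ω.eraseIdx j) = cs.wordProd ω * cs.simple i := by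
  obtain ⟨j, hj, hji⟩ := List.getElem_of_mem (cs.simple_mem_rightInvSeq_of_isRightDescent h)
  refine ⟨j, by simpa using hj, ?_⟩
  rw [← cs.wordProd_mul_getD_rightInvSeq, List.getD_eq_getElem _ _ hj, hji]

theorem IsReduced.length_wordProd_eraseIdx_lt {cs : CoxeterSystem M W} {ω : List B}
    (hω : cs.IsReduced ω) {j : ℕ} (hj : j < ω.length) :
    cs.length (cs.wordProd (ω.eraseIdx j)) < cs.length (cs.wordProd ω) :=
  calc cs.length (cs.wordProd (ω.eraseIdx j))
    _ ≤ (ω.eraseIdx j).length := cs.length_wordProd_le _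
    _ < ω.length := by rw [← List.length_eraseIdx_add_one hj]; exact lt_add_one _
    _ = cs.length (cs.wordProd ω) := hω.symm

theorem exists_length_lt_or_isRightDescent_of_isRightDescent_mul {v w : W} {i : B}
    (h : cs.IsRightDescent (v * w) i) :
    (∃ v', cs.length v' < cs.length v ∧ v' * w = v * w * cs.simple i) ∨
      cs.IsRightDescent w i := by
  obtain ⟨α, hα, rfl⟩ := cs.exists_isReduced v
  obtain ⟨β, hβ, rfl⟩ := cs.exists_isReduced w
  rw [← cs.wordProd_append] at h ⊢
  obtain ⟨k, hk, hki⟩ := cs.exists_wordProd_eraseIdx_eq_mul_simple h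
  rw [List.length_append] at hk
  by_cases hkα : k < α.length
  · refine .inl ⟨_, hα.length_wordProd_eraseIdx_lt hkα, ?_⟩
    rw [← cs.wordProd_append, ← hki, List.eraseIdx_append_of_lt_length hkα]
  · rw [List.eraseIdx_append_of_length_le (not_lt.mp hkα), cs.wordProd_append,
      cs.wordProd_append, mul_assoc] at hki
    refine .inr ?_
    rw [IsRightDescent, ← mul_left_cancel hki]
    exact hβ.length_wordProd_eraseIdx_lt (by omega)

theorem length_mul_eq_add_of_forall_length_le {J : Set B} {x : W}
    (hx : ∀ v ∈ Subgroup.closure (cs.simple '' J), cs.length x ≤ cs.length (x * v)) {u : W}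
    (hu : u ∈ Subgroup.closure (cs.simple '' J)) :
    cs.length (x * u) = cs.length x + cs.length u := by
  have step : ∀ u ∈ Subgroup.closure (cs.simple '' J), ∀ j ∈ J,
      cs.length (x * u) = cs.length x + cs.length u →
      cs.length (x * (u * cs.simple j)) = cs.length x + cs.length (u * cs.simple j) := by
    intro u hu j hj ih
    rw [← mul_assoc]
    rcases cs.length_mul_simple u j with hup | hdown
    · have hxu : ¬cs.IsRightDescent (x * u) j := by
        intro hd
        rcases cs.exists_length_lt_or_isRightDescent_of_isRightDescent_mul hd with
          ⟨x', hlt, hx'⟩ | hd'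
        · have hmem : u * cs.simple j * u⁻¹ ∈ Subgroup.closure (cs.simple '' J) :=
            Subgroup.mul_mem _ (Subgroup.mul_mem _ hu (Subgroup.subset_closure ⟨j, hj, rfl⟩))
              (Subgroup.inv_mem _ hu)
          have hx'' : x' = x * (u * cs.simple j * u⁻¹) := by
            rw [eq_mul_inv_of_mul_eq hx']; group
          exact (hx _ hmem).not_gt (hx'' ▸ hlt)
        · have : cs.length (u * cs.simple j) < cs.length u := hd'
          omega
      rw [cs.not_isRightDescent_iff.mp hxu, ih, hup, add_assoc]
    · have := cs.length_mul_le x (u * cs.simple j)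
      rw [← mul_assoc] at this
      rcases cs.length_mul_simple (x * u) j with h | h <;> omega
  induction hu using Subgroup.closure_induction_right with
  | one => simp
  | mul_right u hu _ hj ih =>
    obtain ⟨j, hj, rfl⟩ := hj
    exact step u hu j hj ih
  | mul_inv_cancel u hu _ hj ih =>
    obtain ⟨j, hj, rfl⟩ := hj
    rw [cs.inv_simple]
    exact step u hu j hj ih

section Twisting

variable {B' W' F : Type*} [Group W'] {M' : CoxeterMatrix B'} {cs' : CoxeterSystem M' W'}
  [FunLike F W W'] [MonoidHomClass F W W'] {f : F} {p : B → B'}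

theorem map_wordProd (hp : ∀ i, f (cs.simple i) = cs'.simple (p i)) (ω : List B) :
    f (cs.wordProd ω) = cs'.wordProd (ω.map p) := by
  simp only [wordProd, map_list_prod, List.map_map]
  congr 1
  exact List.map_congr_left fun i _ => hp i

theorem length_map_le (hp : ∀ i, f (cs.simple i) = cs'.simple (p i)) (w : W) :
    cs'.length (f w) ≤ cs.length w := by
  obtain ⟨ω, hω, rfl⟩ := cs.exists_isReduced w
  calc cs'.length (f (cs.wordProd ω))
    _ = cs'.length (cs'.wordProd (ω.map p)) := by rw [cs.map_wordProd hp]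
    _ ≤ (ω.map p).length := cs'.length_wordProd_le _
    _ = cs.length (cs.wordProd ω) := by rw [List.length_map, hω]

theorem map_mem_closure_simple_image (hp : ∀ i, f (cs.simple i) = cs'.simple (p i)) {J : Set B}
    {u : W} (hu : u ∈ Subgroup.closure (cs.simple '' J)) :
    f u ∈ Subgroup.closure (cs'.simple '' (p '' J)) := by
  have hmap := Subgroup.mem_map_of_mem (f : W →* W') hu
  rw [MonoidHom.map_closure, Set.image_image] at hmap
  simpa only [MonoidHom.coe_coe, hp, Set.image_image] using hmap

end Twisting

theorem exists_forall_length_le_length_mul (H : Subgroup W) (a : W) :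
    ∃ u ∈ H, ∀ v ∈ H, cs.length (a * u) ≤ cs.length (a * u * v) := by
  set u := Function.argminOn (fun u => cs.length (a * u)) (H : Set W) ⟨1, H.one_mem⟩
  have hu : u ∈ H := Function.argminOn_mem _ _ _
  refine ⟨u, hu, fun v hv => ?_⟩
  rw [mul_assoc]
  exact Function.argminOn_le (fun u => cs.length (a * u)) (H : Set W) (H.mul_mem hu hv)

theorem length_le_length_mul_mul_map_inv {F : Type*} [FunLike F W W] [MonoidHomClass F W W]
    {f : F} {p : B → B} (hp : ∀ i, f (cs.simple i) = cs.simple (p i)) {J : Set B} {w x : W}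
    (hw : w ∈ Subgroup.closure (cs.simple '' J))
    (hx : ∀ v ∈ Subgroup.closure (cs.simple '' J), cs.length x ≤ cs.length (x * v)) :
    cs.length w ≤ cs.length (x * w * (f x)⁻¹) := by
  have hxw := cs.length_mul_eq_add_of_forall_length_le hx hw
  have hfx := cs.length_map_le hp x
  have := cs.length_le_length_mul_add_right (x * w) (f x)⁻¹
  rw [cs.length_inv] at this
  omega

end CoxeterSystem

/-- Lemma 7.2: for `w ∈ W_J` and `x ∈ W^J`, `ℓ(x w σ(x)⁻¹) ≥ ℓ(w)` where `σ` is an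
automorphism of `W` with `σ(I) = I` and `σ(J) = J`. In particular, if `w` has minimal
length in its `σ|_J`-twisted conjugacy class in `W_J`, then `w` has minimal length in its
`σ`-twisted conjugacy class in `W`. -/
theorem length_twisted_conj_ge_of_min_rep
    {B W : Type*} [Group W] {M : CoxeterMatrix B} (cs : CoxeterSystem M W)
    (σ : W ≃* W) (p : B ≃ B) (hp : ∀ i : B, σ (cs.simple i) = cs.simple (p i))
    (J : Set B) (hJ : p '' J = J)
    (w : W) (hw : w ∈ Subgroup.closure (cs.simple '' J))
    (x : W) (hx : ∀ u ∈ Subgroup.closure (cs.simple '' J),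
      cs.length x ≤ cs.length (x * u)) :
    cs.length w ≤ cs.length (x * w * (σ x)⁻¹) ∧
      ((∀ u ∈ Subgroup.closure (cs.simple '' J),
          cs.length w ≤ cs.length (u * w * (σ u)⁻¹)) →
        ∀ a : W, cs.length w ≤ cs.length (a * w * (σ a)⁻¹)) := by
  refine ⟨cs.length_le_length_mul_mul_map_inv hp hw hx, fun hmin a => ?_⟩
  have hσP : ∀ v ∈ Subgroup.closure (cs.simple '' J), σ v ∈ Subgroup.closure (cs.simple '' J) :=
    fun v hv => hJ ▸ cs.map_mem_closure_simple_image hp hv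
  set P := Subgroup.closure (cs.simple '' J)
  obtain ⟨u, hu, hau⟩ := cs.exists_forall_length_le_length_mul P a
  have hw' : u⁻¹ * w * (σ u⁻¹)⁻¹ ∈ P :=
    P.mul_mem (P.mul_mem (P.inv_mem hu) hw) (P.inv_mem (hσP _ (P.inv_mem hu)))
  have hconj : a * w * (σ a)⁻¹ = a * u * (u⁻¹ * w * (σ u⁻¹)⁻¹) * (σ (a * u))⁻¹ := by
    simp only [map_mul, map_inv]
    group
  calc cs.length w
    _ ≤ cs.length (u⁻¹ * w * (σ u⁻¹)⁻¹) := hmin _ (P.inv_mem hu)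
    _ ≤ cs.length (a * w * (σ a)⁻¹) :=
      hconj ▸ cs.length_le_length_mul_mul_map_inv hp hw' hau
end
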